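/- Let μ be the natural probability measure on the middle-third Cantor set (the Hausdorff measure of dimension γ = log 2 / log 3 restricted to the Cantor set). Let y ∈ ℝ, n ∈ ℕ, and σ ∈ (0, 1/2). Define A_n^y(σ) = {x ∈ ℝ : ‖2^n x − y‖ < σ}. Then μ(A_n^y(σ)) ≤ c·σ^γ for some absolute constant c > 0. -/

import Mathlib

open MeasureTheory

/-- the Hausdorff dimension of the middle-third Cantor set -/
noncomputable def cantorDim : ℝ := Real.log 2 / Real.log 3

/-- the natural measure on the middle-third Cantor set: the `γ`-dimensional
Hausdorff measure restricted to the Cantor set -/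
noncomputable def cantorMeasure : Measure ℝ := μH[cantorDim].restrict cantorSet

/-- distance from `x` to the nearest integer -/
noncomputable def nint (x : ℝ) : ℝ := |x - round x|

/-- `A_n^y(σ) = {x : ‖2^n x - y‖ < σ}` -/
def approxSet (n : ℕ) (y σ : ℝ) : Set ℝ := {x : ℝ | nint (2 ^ n * x - y) < σ}

/-!
By self-similarity, `μH[γ] (K ∩ W) ≤ ½ μH[γ] (K ∩ 3W) + ½ μH[γ] (K ∩ (3W - 2))`, and a
half-open interval of length `3⁻ᵐ⁻¹` starting at `u` meets only the left half of `K` if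
`u ≤ 1/3` and only the right half otherwise; by induction `K ∩ [u, u + 3⁻ᵐ)` has measure at most
`2⁻ᵐ`, the base case `μH[γ] K ≤ 1` coming from the covers by the `2ˡ` level-`l` intervals.

Cover `K` by `2ʲ` intervals of length `3⁻ʲ ≤ 2⁻ⁿ`, with `j` minimal. Each of them meets at most
three of the intervals of length `2σ / 2ⁿ` composing `A_n^y(σ)`, and each of these has measure
`≲ (σ / 2ⁿ)^γ`. Since `2ʲ ≈ 3^{jγ} ≈ 2^{nγ}`, this gives `μ(A_n^y(σ)) ≲ σ^γ`.
-/

open Set Filter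
open scoped ENNReal NNReal

lemma cantorDim_pos : 0 < cantorDim :=
  div_pos (Real.log_pos (by norm_num)) (Real.log_pos (by norm_num))

lemma cantorDim_le_one : cantorDim ≤ 1 :=
  (div_le_one (Real.log_pos (by norm_num))).mpr (Real.log_le_log (by norm_num) (by norm_num))

lemma inv_three_rpow_cantorDim : (3⁻¹ : ℝ) ^ cantorDim = 2⁻¹ := by
  rw [Real.inv_rpow (by norm_num), cantorDim, Real.rpow_def_of_pos (by norm_num),
    mul_div_cancel₀ _ (Real.log_pos (by norm_num)).ne', Real.exp_log (by norm_num)]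

lemma inv_three_pow_rpow_cantorDim (k : ℕ) : ((3⁻¹ : ℝ) ^ k) ^ cantorDim = 2⁻¹ ^ k := by
  rw [← Real.rpow_natCast, ← Real.rpow_mul (by norm_num), mul_comm, Real.rpow_mul (by norm_num),
    inv_three_rpow_cantorDim, Real.rpow_natCast]

lemma hausdorffMeasure_homothety_inv_three_image (c : ℝ) (s : Set ℝ) :
    μH[cantorDim] (AffineMap.homothety c (3⁻¹ : ℝ) '' s) = 2⁻¹ * μH[cantorDim] s := by
  have h : ‖(3⁻¹ : ℝ)‖₊ ^ cantorDim = (2⁻¹ : ℝ≥0) := by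
    ext
    simp [inv_three_rpow_cantorDim]
  rw [hausdorffMeasure_homothety_image cantorDim_pos.le c (by norm_num) s, h, ENNReal.smul_def]
  simp

lemma hausdorffMeasure_image_div_three (s : Set ℝ) :
    μH[cantorDim] ((· / 3) '' s) = 2⁻¹ * μH[cantorDim] s := by
  have : (· / 3 : ℝ → ℝ) = AffineMap.homothety 0 (3⁻¹ : ℝ) := by
    ext x
    simp [AffineMap.homothety_apply, div_eq_inv_mul]
  rw [this, hausdorffMeasure_homothety_inv_three_image]

lemma hausdorffMeasure_image_two_add_div_three (s : Set ℝ) :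
    μH[cantorDim] ((fun x => (2 + x) / 3) '' s) = 2⁻¹ * μH[cantorDim] s := by
  have : (fun x : ℝ => (2 + x) / 3) = AffineMap.homothety 1 (3⁻¹ : ℝ) := by
    ext x
    simp only [AffineMap.homothety_apply, vsub_eq_sub, smul_eq_mul, vadd_eq_add]
    ring
  rw [this, hausdorffMeasure_homothety_inv_three_image]

lemma hausdorffMeasure_cantorSet_inter_le (w : Set ℝ) :
    μH[cantorDim] (cantorSet ∩ w) ≤ 2⁻¹ * μH[cantorDim] (cantorSet ∩ (· / 3) ⁻¹' w) +
      2⁻¹ * μH[cantorDim] (cantorSet ∩ (fun x => (2 + x) / 3) ⁻¹' w) := by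
  rw [← hausdorffMeasure_image_div_three, ← hausdorffMeasure_image_two_add_div_three,
    image_inter_preimage, image_inter_preimage]
  calc μH[cantorDim] (cantorSet ∩ w)
      = μH[cantorDim] ((· / 3) '' cantorSet ∩ w ∪ (fun x => (2 + x) / 3) '' cantorSet ∩ w) := by
        rw [← union_inter_distrib_right, ← cantorSet_eq_union_halves]
    _ ≤ _ := measure_union_le _ _

noncomputable def cantorLeftEnds : ℕ → Finset ℝ
  | 0 => {0}
  | l + 1 => (cantorLeftEnds l).image (· / 3) ∪ (cantorLeftEnds l).image (fun a => (2 + a) / 3)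

lemma card_cantorLeftEnds_le (l : ℕ) : (cantorLeftEnds l).card ≤ 2 ^ l := by
  induction l with
  | zero => simp [cantorLeftEnds]
  | succ l ih =>
    calc (cantorLeftEnds (l + 1)).card
        ≤ ((cantorLeftEnds l).image (· / 3)).card +
          ((cantorLeftEnds l).image (fun a => (2 + a) / 3)).card := Finset.card_union_le _ _
      _ ≤ 2 ^ l + 2 ^ l := add_le_add (Finset.card_image_le.trans ih) (Finset.card_image_le.trans ih)
      _ = 2 ^ (l + 1) := by ring

lemma preCantorSet_subset_biUnion_cantorLeftEnds (l : ℕ) :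
    preCantorSet l ⊆ ⋃ b ∈ cantorLeftEnds l, Icc b (b + 3⁻¹ ^ l) := by
  induction l with
  | zero => simp [cantorLeftEnds]
  | succ l ih =>
    rintro _ (⟨x, hx, rfl⟩ | ⟨x, hx, rfl⟩) <;>
      obtain ⟨b, hb, hxb⟩ := mem_iUnion₂.mp (ih hx) <;>
      simp only [mem_iUnion, cantorLeftEnds, Finset.mem_union, Finset.mem_image]
    · exact ⟨b / 3, Or.inl ⟨b, hb, rfl⟩, by rw [pow_succ]; constructor <;> linarith [hxb.1, hxb.2]⟩
    · exact ⟨(2 + b) / 3, Or.inr ⟨b, hb, rfl⟩, by rw [pow_succ]; constructor <;> linarith [hxb.1, hxb.2]⟩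

lemma cantorSet_subset_biUnion_cantorLeftEnds (l : ℕ) :
    cantorSet ⊆ ⋃ b ∈ cantorLeftEnds l, Icc b (b + 3⁻¹ ^ l) :=
  (iInter_subset _ l).trans (preCantorSet_subset_biUnion_cantorLeftEnds l)

open Topology in
lemma hausdorffMeasure_cantorSet_le_one : μH[cantorDim] cantorSet ≤ 1 := by
  have hr : Tendsto (fun l : ℕ => ENNReal.ofReal (3⁻¹ ^ l)) atTop (𝓝 0) := by
    simpa using ENNReal.tendsto_ofReal
      (tendsto_pow_atTop_nhds_zero_of_lt_one (by norm_num) (by norm_num : (3⁻¹ : ℝ) < 1))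
  refine (Measure.hausdorffMeasure_le_liminf_sum cantorDim cantorSet _ hr
    (fun l (b : cantorLeftEnds l) => Icc (b : ℝ) (b + 3⁻¹ ^ l))
    (Eventually.of_forall fun l b => by simp [Real.ediam_Icc])
    (Eventually.of_forall fun l x hx => by
      simpa using cantorSet_subset_biUnion_cantorLeftEnds l hx)).trans
    (liminf_le_of_frequently_le' (Frequently.of_forall fun l => ?_))
  calc ∑ b : cantorLeftEnds l, Metric.ediam (Icc (b : ℝ) (b + 3⁻¹ ^ l)) ^ cantorDim
      = ∑ _b : cantorLeftEnds l, ENNReal.ofReal (2⁻¹ ^ l) := by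
        refine Finset.sum_congr rfl fun b _ => ?_
        rw [Real.ediam_Icc, add_sub_cancel_left, ENNReal.ofReal_rpow_of_pos (by positivity),
          inv_three_pow_rpow_cantorDim]
    _ ≤ 2 ^ l * ENNReal.ofReal (2⁻¹ ^ l) := by
        simp only [Finset.sum_const, Finset.card_univ, Fintype.card_coe, nsmul_eq_mul]
        gcongr
        exact_mod_cast card_cantorLeftEnds_le l
    _ = 1 := by
        rw [← ENNReal.ofReal_ofNat 2, ← ENNReal.ofReal_pow zero_le_two,
          ← ENNReal.ofReal_mul (by positivity), ← mul_pow]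
        norm_num

lemma hausdorffMeasure_cantorSet_inter_Ico_le (m : ℕ) (u : ℝ) :
    μH[cantorDim] (cantorSet ∩ Ico u (u + 3⁻¹ ^ m)) ≤ 2⁻¹ ^ m := by
  induction m generalizing u with
  | zero => simpa using (measure_mono inter_subset_left).trans hausdorffMeasure_cantorSet_le_one
  | succ m ih =>
    have hstep : (3⁻¹ : ℝ) ^ (m + 1) = 3⁻¹ ^ m / 3 := by rw [pow_succ, div_eq_mul_inv]
    have hsmall : (3⁻¹ : ℝ) ^ (m + 1) ≤ 3⁻¹ := pow_le_of_le_one (by norm_num) (by norm_num) m.succ_ne_zero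
    refine (hausdorffMeasure_cantorSet_inter_le _).trans ?_
    rcases le_or_gt u 3⁻¹ with hu | hu
    · have hleft : cantorSet ∩ (· / 3) ⁻¹' Ico u (u + 3⁻¹ ^ (m + 1)) ⊆
          cantorSet ∩ Ico (3 * u) (3 * u + 3⁻¹ ^ m) := by
        rintro x ⟨hxK, hx₁, hx₂⟩
        exact ⟨hxK, by linarith, by linarith⟩
      have hright : cantorSet ∩ (fun x => (2 + x) / 3) ⁻¹' Ico u (u + 3⁻¹ ^ (m + 1)) = ∅ := by
        refine eq_empty_of_forall_notMem fun x ⟨hxK, _, hx⟩ => ?_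
        linarith [(cantorSet_subset_unitInterval hxK).1]
      rw [hright, measure_empty, mul_zero, add_zero, pow_succ' (2⁻¹ : ℝ≥0∞) m]
      gcongr
      exact (measure_mono hleft).trans (ih _)
    · have hleft : cantorSet ∩ (· / 3) ⁻¹' Ico u (u + 3⁻¹ ^ (m + 1)) = ∅ := by
        refine eq_empty_of_forall_notMem fun x ⟨hxK, hx, _⟩ => ?_
        linarith [(cantorSet_subset_unitInterval hxK).2]
      have hright : cantorSet ∩ (fun x => (2 + x) / 3) ⁻¹' Ico u (u + 3⁻¹ ^ (m + 1)) ⊆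
          cantorSet ∩ Ico (3 * u - 2) (3 * u - 2 + 3⁻¹ ^ m) := by
        rintro x ⟨hxK, hx₁, hx₂⟩
        exact ⟨hxK, by linarith, by linarith⟩
      rw [hleft, measure_empty, mul_zero, zero_add, pow_succ' (2⁻¹ : ℝ≥0∞) m]
      gcongr
      exact (measure_mono hright).trans (ih _)

lemma approxSet_inter_Icc_subset {n : ℕ} {y σ : ℝ} (hσ : σ ≤ 1 / 2) (a : ℝ) :
    approxSet n y σ ∩ Icc a (a + (2 ^ n)⁻¹) ⊆
      ⋃ k ∈ Finset.Icc ⌊2 ^ n * a - y⌋ (⌊2 ^ n * a - y⌋ + 2),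
        Ioo ((k + y - σ) / 2 ^ n) ((k + y + σ) / 2 ^ n) := by
  rintro x ⟨hxA, hax, hxa⟩
  have h2n : (0 : ℝ) < 2 ^ n := by positivity
  have hcx : 2 ^ n * a ≤ 2 ^ n * x := by gcongr
  have hxc : 2 ^ n * x ≤ 2 ^ n * a + 1 := by
    have := mul_le_mul_of_nonneg_left hxa h2n.le
    rwa [mul_add, mul_inv_cancel₀ h2n.ne'] at this
  set c := 2 ^ n * a - y
  set k := round (2 ^ n * x - y)
  obtain ⟨hk₁, hk₂⟩ := abs_lt.mp (show |2 ^ n * x - y - k| < σ from hxA)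
  have hc₁ := Int.floor_le c
  have hc₂ := Int.lt_floor_add_one c
  have hlow : ((⌊c⌋ - 1 : ℤ) : ℝ) < k := by push_cast; linarith
  have hhigh : (k : ℝ) < ((⌊c⌋ + 3 : ℤ) : ℝ) := by push_cast; linarith
  refine mem_iUnion₂.mpr ⟨k, Finset.mem_Icc.mpr ?_, ?_, ?_⟩
  · have := Int.cast_lt.mp hlow
    have := Int.cast_lt.mp hhigh
    omega
  · rw [div_lt_iff₀ h2n]
    linarith
  · rw [lt_div_iff₀ h2n]
    linarith

lemma cantorMeasure_approxSet_le {n j m : ℕ} {y σ : ℝ} (hσ : σ ≤ 1 / 2)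
    (hj : (3⁻¹ : ℝ) ^ j ≤ (2 ^ n)⁻¹) (hm : 2 * σ / 2 ^ n ≤ 3⁻¹ ^ m) :
    cantorMeasure (approxSet n y σ) ≤ 3 * 2 ^ j * 2⁻¹ ^ m := by
  have hcover : cantorSet ∩ approxSet n y σ ⊆
      ⋃ a ∈ cantorLeftEnds j, ⋃ k ∈ Finset.Icc ⌊2 ^ n * a - y⌋ (⌊2 ^ n * a - y⌋ + 2),
        cantorSet ∩ Ico ((k + y - σ) / 2 ^ n) ((k + y - σ) / 2 ^ n + 3⁻¹ ^ m) := by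
    rintro x ⟨hxK, hxA⟩
    obtain ⟨a, ha, hax, hxa⟩ := mem_iUnion₂.mp (cantorSet_subset_biUnion_cantorLeftEnds j hxK)
    obtain ⟨k, hk, hkx, hxk⟩ :=
      mem_iUnion₂.mp (approxSet_inter_Icc_subset hσ a ⟨hxA, hax, hxa.trans (by linarith)⟩)
    have hlen : (k + y + σ) / 2 ^ n = (k + y - σ) / 2 ^ n + 2 * σ / 2 ^ n := by ring
    exact mem_iUnion₂.mpr ⟨a, ha, mem_iUnion₂.mpr ⟨k, hk, hxK, hkx.le, by linarith⟩⟩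
  rw [cantorMeasure, Measure.restrict_apply' isClosed_cantorSet.measurableSet, inter_comm]
  calc μH[cantorDim] (cantorSet ∩ approxSet n y σ)
      ≤ ∑ a ∈ cantorLeftEnds j, ∑ k ∈ Finset.Icc ⌊2 ^ n * a - y⌋ (⌊2 ^ n * a - y⌋ + 2),
          μH[cantorDim] (cantorSet ∩ Ico ((k + y - σ) / 2 ^ n) ((k + y - σ) / 2 ^ n + 3⁻¹ ^ m)) :=
        (measure_mono hcover).trans <| (measure_biUnion_finset_le _ _).trans <|
          Finset.sum_le_sum fun a _ => measure_biUnion_finset_le _ _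
    _ ≤ ∑ a ∈ cantorLeftEnds j, ∑ k ∈ Finset.Icc ⌊2 ^ n * a - y⌋ (⌊2 ^ n * a - y⌋ + 2),
          (2⁻¹ : ℝ≥0∞) ^ m := by
        gcongr
        exact hausdorffMeasure_cantorSet_inter_Ico_le m _
    _ = (cantorLeftEnds j).card * (3 * 2⁻¹ ^ m) := by simp [Int.card_Icc, add_assoc]
    _ ≤ 2 ^ j * (3 * 2⁻¹ ^ m) := by
        gcongr
        exact_mod_cast card_cantorLeftEnds_le j
    _ = 3 * 2 ^ j * 2⁻¹ ^ m := by ring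

lemma exists_cantor_scales (n : ℕ) {σ : ℝ} (hσ₀ : 0 < σ) (hσ : σ < 1 / 2) :
    ∃ j m : ℕ, (3⁻¹ : ℝ) ^ j ≤ (2 ^ n)⁻¹ ∧ 2 * σ / 2 ^ n ≤ 3⁻¹ ^ m ∧
      (2 : ℝ) ^ j * 2⁻¹ ^ m ≤ 8 * σ ^ cantorDim := by
  have h2n : (1 : ℝ) ≤ 2 ^ n := one_le_pow₀ one_le_two
  obtain ⟨i, hi₁, hi₂⟩ := exists_nat_pow_near_of_lt_one (inv_pos.2 (zero_lt_one.trans_le h2n))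
    (inv_le_one_of_one_le₀ h2n) (by norm_num : (0 : ℝ) < 3⁻¹) (by norm_num)
  obtain ⟨m, hm₁, hm₂⟩ := exists_nat_pow_near_of_lt_one (x := 2 * σ / 2 ^ n) (by positivity)
    ((div_le_one (by positivity)).2 (by linarith)) (by norm_num : (0 : ℝ) < 3⁻¹) (by norm_num)
  refine ⟨i + 1, m, hi₁.le, hm₂, ?_⟩
  have hiγ : ((2 : ℝ) ^ n)⁻¹ ^ cantorDim ≤ 2⁻¹ ^ i := by
    rw [← inv_three_pow_rpow_cantorDim]
    exact Real.rpow_le_rpow (by positivity) hi₂ cantorDim_pos.le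
  have hmγ : (2⁻¹ : ℝ) ^ (m + 1) < (2 * σ / 2 ^ n) ^ cantorDim := by
    rw [← inv_three_pow_rpow_cantorDim]
    exact Real.rpow_lt_rpow (by positivity) hm₁ cantorDim_pos
  have h2γ : (2 : ℝ) ^ cantorDim ≤ 2 := by
    simpa using Real.rpow_le_rpow_of_exponent_le one_le_two cantorDim_le_one
  have hσγ : (2 * σ / 2 ^ n) ^ cantorDim ≤ 2 * σ ^ cantorDim * ((2 : ℝ) ^ n)⁻¹ ^ cantorDim := by
    rw [div_eq_mul_inv, Real.mul_rpow (by positivity) (by positivity),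
      Real.mul_rpow zero_le_two hσ₀.le]
    gcongr
  have hcancel : (2 : ℝ) ^ i * 2⁻¹ ^ i = 1 := by rw [← mul_pow]; norm_num
  calc (2 : ℝ) ^ (i + 1) * 2⁻¹ ^ m = 4 * 2 ^ i * 2⁻¹ ^ (m + 1) := by ring
    _ ≤ 4 * 2 ^ i * (2 * σ ^ cantorDim * 2⁻¹ ^ i) := by
        gcongr
        exact hmγ.le.trans (hσγ.trans (by gcongr))
    _ = 8 * σ ^ cantorDim := by linear_combination 8 * σ ^ cantorDim * hcancel

theorem stmt5 :
    ∃ c : ℝ, 0 < c ∧ ∀ (y : ℝ) (n : ℕ) (σ : ℝ), 0 < σ → σ < 1 / 2 →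
      (cantorMeasure (approxSet n y σ)).toReal ≤ c * σ ^ cantorDim := by
  refine ⟨24, by norm_num, fun y n σ hσ₀ hσ => ?_⟩
  obtain ⟨j, m, hj, hm, hjm⟩ := exists_cantor_scales n hσ₀ hσ
  calc (cantorMeasure (approxSet n y σ)).toReal
      ≤ (3 * 2 ^ j * 2⁻¹ ^ m : ℝ≥0∞).toReal :=
        ENNReal.toReal_mono (by finiteness) (cantorMeasure_approxSet_le hσ.le hj hm)
    _ = 3 * (2 ^ j * 2⁻¹ ^ m) := by simp [mul_assoc]
    _ ≤ 24 * σ ^ cantorDim := by linarith
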